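/- Let $R$ be a commutative ring, $G$ and $H$ finite groups, $X \leq H \times G$ a subgroup, and $M$ an $RX$-module. Let $U = (H \times G)/X$ be the $(H,G)$-biset with action $h \cdot (t,s)X \cdot g = (ht, g^{-1}s)X$. Define a functor $\tilde{M}: \mathcal{C}_U \to R\text{-}\mathsf{Mod}$ by $\tilde{M}((h,g)X) = M$, with structure maps determined by a chosen set $S$ of coset representatives: for $(t,s) \in S$ and $(h,g) \in H \times G$, the map $\tilde{M}(h,g): \tilde{M}((t,s)X) \to \tilde{M}((ht,gs)X)$ sends $m$ to $(y,x)\cdot m$ where $(y,x) \in X$ is the unique element with $(ht,gs)(y,x)^{-1} \in S$. Then $\tilde M$ is a well-defined functor and there is an isomorphism of $(RH,RG)$-bimodules $\Sigma(\tilde{M}) \cong \mathrm{Ind}_X^{H \times G} M$. -/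

import Mathlib

open CategoryTheory MulOpposite

/-- An object wrapper: the objects of the category associated to an `(H,G)`-biset `U`
are the elements of `U`. -/
structure BisetCat (H G U : Type*) where
  x : U

variable {H G U : Type*} [Group H] [Group G]
  [MulAction H U] [MulAction Gᵐᵒᵖ U] [SMulCommClass H Gᵐᵒᵖ U]

/-- The category associated to an `(H,G)`-biset `U`: objects are elements of `U`,
and morphisms `u ⟶ v` are pairs `(h,g)` with `h • u = v • g`; composition of
`(h,g) : u ⟶ v` and `(h',g') : v ⟶ w` is `(h'*h, g'*g)` and the identity is `(1,1)`. -/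
instance bisetCategory : Category (BisetCat H G U) where
  Hom u v := {p : H × G // p.1 • u.x = op p.2 • v.x}
  id u := ⟨(1, 1), by simp⟩
  comp {u v w} f g := ⟨(g.1.1 * f.1.1, g.1.2 * f.1.2), by
    have hf := f.2; have hg := g.2
    calc (g.1.1 * f.1.1) • u.x = g.1.1 • (f.1.1 • u.x) := by rw [mul_smul]
    _ = g.1.1 • (op f.1.2 • v.x) := by rw [hf]
    _ = op f.1.2 • (g.1.1 • v.x) := by rw [smul_comm]
    _ = op f.1.2 • (op g.1.2 • w.x) := by rw [hg]
    _ = op (g.1.2 * f.1.2) • w.x := by rw [← mul_smul, ← op_mul]⟩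
  id_comp f := Subtype.ext (by simp [Prod.ext_iff])
  comp_id f := Subtype.ext (by simp [Prod.ext_iff])
  assoc f g h := Subtype.ext (by simp [Prod.ext_iff, mul_assoc])


open TensorProduct DirectSum

universe u

attribute [local instance] Classical.propDecidable

open TensorProduct

/-- The relations defining the induced module `R Γ ⊗_{R X} M`: the submodule of
`R Γ ⊗_R M` spanned by the elements `(a x) ⊗ m - a ⊗ (x • m)` for `x ∈ X`. -/
noncomputable def indRel (R Γ : Type*) [CommRing R] [Group Γ] (X : Subgroup Γ)
    (M : Type*) [AddCommGroup M] [Module R M] (ρ : X →* Module.End R M) :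
    Submodule R ((MonoidAlgebra R Γ) ⊗[R] M) :=
  Submodule.span R {z | ∃ (γ : Γ) (x : X) (m : M),
    z = MonoidAlgebra.single (γ * (x : Γ)) (1 : R) ⊗ₜ[R] m -
        MonoidAlgebra.single γ (1 : R) ⊗ₜ[R] (ρ x m)}

/-- The induced module `Ind_X^Γ M = R Γ ⊗_{R X} M`, realized as the quotient of
`R Γ ⊗_R M` by the induction relations. -/
def Ind (R Γ : Type*) [CommRing R] [Group Γ] (X : Subgroup Γ)
    (M : Type*) [AddCommGroup M] [Module R M] (ρ : X →* Module.End R M) :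
    Type _ :=
  ((MonoidAlgebra R Γ) ⊗[R] M) ⧸ indRel R Γ X M ρ

noncomputable instance (R Γ : Type*) [CommRing R] [Group Γ] (X : Subgroup Γ)
    (M : Type*) [AddCommGroup M] [Module R M] (ρ : X →* Module.End R M) :
    AddCommGroup (Ind R Γ X M ρ) :=
  inferInstanceAs (AddCommGroup (((MonoidAlgebra R Γ) ⊗[R] M) ⧸ indRel R Γ X M ρ))

noncomputable instance (R Γ : Type*) [CommRing R] [Group Γ] (X : Subgroup Γ)
    (M : Type*) [AddCommGroup M] [Module R M] (ρ : X →* Module.End R M) :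
    Module R (Ind R Γ X M ρ) :=
  inferInstanceAs (Module R (((MonoidAlgebra R Γ) ⊗[R] M) ⧸ indRel R Γ X M ρ))

/-- The canonical generator `(c γ) ⊗ m` of the induced module. -/
noncomputable def Ind.gen (R Γ : Type*) [CommRing R] [Group Γ] (X : Subgroup Γ)
    (M : Type*) [AddCommGroup M] [Module R M] (ρ : X →* Module.End R M)
    (γ : Γ) (c : R) (m : M) : Ind R Γ X M ρ :=
  Submodule.Quotient.mk (MonoidAlgebra.single γ c ⊗ₜ[R] m)

variable {H G : Type u} [Group H] [Group G] (X : Subgroup (H × G))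

/-- The left `H`-action on `(H × G)/X`: `h • (t,s)X = (ht, s)X`. -/
instance quotHAction : MulAction H ((H × G) ⧸ X) where
  smul h q := ((h, (1 : G)) : H × G) • q
  one_smul q := by show ((1, (1:G)) : H × G) • q = q; exact one_smul (H × G) q
  mul_smul h h' q := by
    show (((h * h', (1:G)) : H × G)) • q = ((h, (1:G)) : H × G) • (((h', (1:G)) : H × G) • q)
    rw [smul_smul]
    congr 1
    ext <;> simp

/-- The right `G`-action on `(H × G)/X`: `(t,s)X • g = (t, g⁻¹s)X`. -/
instance quotGAction : MulAction Gᵐᵒᵖ ((H × G) ⧸ X) where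
  smul g q := (((1 : H), g.unop⁻¹) : H × G) • q
  one_smul q := by show (((1:H), (1:G)⁻¹) : H × G) • q = q; simp; exact one_smul (H × G) q
  mul_smul g g' q := by
    show (((1:H), (g * g').unop⁻¹) : H × G) • q =
      (((1:H), g.unop⁻¹) : H × G) • ((((1:H), g'.unop⁻¹) : H × G) • q)
    rw [smul_smul]
    congr 1
    ext <;> simp [mul_comm]

instance quotSMulComm : SMulCommClass H Gᵐᵒᵖ ((H × G) ⧸ X) where
  smul_comm h g q := by
    show ((h, (1:G)) : H × G) • ((((1:H), g.unop⁻¹) : H × G) • q) =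
      (((1:H), g.unop⁻¹) : H × G) • (((h, (1:G)) : H × G) • q)
    rw [smul_smul, smul_smul]
    congr 1
    ext <;> simp

lemma quot_smul_aux (h : H) (g : G) (q : (H × G) ⧸ X) :
    h • q = (op g : Gᵐᵒᵖ) • (((h, g) : H × G) • q) := by
  show ((h, (1:G)) : H × G) • q = (((1:H), g⁻¹) : H × G) • (((h, g) : H × G) • q)
  rw [smul_smul]
  congr 1
  ext <;> simp

/-!
Every `γ ∈ H × G` factors uniquely as `γ = q.out * x` with `q = γX` and `x ∈ X`. The offsets
`x` of the translates `p * q.out` satisfy a cocycle identity, which is exactly functoriality of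
`M̃`. The assignment `γ ⊗ m ↦ x • m` in summand `γX` respects the relations of
`R(H × G) ⊗_{RX} M`, and is inverse to `m ↦ q.out ⊗ m` on summand `q`; transporting the
`H × G`-action of the induced module along this isomorphism gives back the structure maps of `M̃`.
-/

section CosetOffset

variable {Γ : Type*} [Group Γ] {X : Subgroup Γ}

/-- The unique `x ∈ X` with `γ = q.out * x`; for `γ = (h, g) * q.out` it is the paper's `(y, x)`. -/
noncomputable def cosetOffset (γ : Γ) {q : Γ ⧸ X} (h : (γ : Γ ⧸ X) = q) : X :=
  ⟨q.out⁻¹ * γ, QuotientGroup.eq.mp ((QuotientGroup.out_eq' q).trans h.symm)⟩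

lemma coe_cosetOffset (γ : Γ) {q : Γ ⧸ X} (h : (γ : Γ ⧸ X) = q) :
    (cosetOffset γ h : Γ) = q.out⁻¹ * γ :=
  rfl

lemma out_mul_cosetOffset (γ : Γ) {q : Γ ⧸ X} (h : (γ : Γ ⧸ X) = q) :
    q.out * cosetOffset γ h = γ :=
  mul_inv_cancel_left _ _

lemma cosetOffset_eq_of_mul_inv_eq {γ y : Γ} {q : Γ ⧸ X} (h : (γ : Γ ⧸ X) = q)
    (hy : γ * y⁻¹ = q.out) : (cosetOffset γ h : Γ) = y := by
  rw [coe_cosetOffset, ← hy]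
  group

lemma cosetOffset_out (q : Γ ⧸ X) : cosetOffset q.out (QuotientGroup.out_eq' q) = 1 :=
  Subtype.ext (inv_mul_cancel _)

lemma cosetOffset_mul_mem (γ : Γ) (x : X) {q : Γ ⧸ X} (h : (γ : Γ ⧸ X) = q)
    (h' : ((γ * x : Γ) : Γ ⧸ X) = q) : cosetOffset (γ * x) h' = cosetOffset γ h * x :=
  Subtype.ext (mul_assoc _ _ _).symm

lemma smul_eq_mk_mul_out (p : Γ) (q : Γ ⧸ X) : p • q = ((p * q.out : Γ) : Γ ⧸ X) := by
  conv_lhs => rw [← QuotientGroup.out_eq' q]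
  rfl

lemma cosetOffset_mul_mul_out {p p' : Γ} {q q' q'' : Γ ⧸ X}
    (hp : ((p * q.out : Γ) : Γ ⧸ X) = q') (hp' : ((p' * q'.out : Γ) : Γ ⧸ X) = q'')
    (h : ((p' * p * q.out : Γ) : Γ ⧸ X) = q'') :
    cosetOffset (p' * p * q.out) h = cosetOffset (p' * q'.out) hp' * cosetOffset (p * q.out) hp :=
  Subtype.ext (by simp only [coe_cosetOffset, Subgroup.coe_mul]; group)

end CosetOffset

namespace Ind

variable {R Γ : Type*} [CommRing R] [Group Γ] {X : Subgroup Γ}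
  {M : Type*} [AddCommGroup M] [Module R M] {ρ : X →* Module.End R M}
  {N : Type*} [AddCommGroup N] [Module R N]

lemma gen_mul_mem (γ : Γ) (x : X) (m : M) :
    gen R Γ X M ρ (γ * x) 1 m = gen R Γ X M ρ γ 1 (ρ x m) :=
  (Submodule.Quotient.eq _).mpr (Submodule.subset_span ⟨γ, x, m, rfl⟩)

@[ext]
lemma hom_ext {f g : Ind R Γ X M ρ →ₗ[R] N}
    (h : ∀ (γ : Γ) (m : M), f (gen R Γ X M ρ γ 1 m) = g (gen R Γ X M ρ γ 1 m)) : f = g :=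
  Submodule.linearMap_qext _ <| TensorProduct.ext <| MonoidAlgebra.lhom_ext' fun γ =>
    LinearMap.ext_ring <| LinearMap.ext fun m => h γ m

noncomputable def lift (F : Γ → M →ₗ[R] N) (hF : ∀ (γ : Γ) (x : X), F (γ * x) = F γ ∘ₗ ρ x) :
    Ind R Γ X M ρ →ₗ[R] N :=
  Submodule.liftQ _
    (TensorProduct.lift ((Finsupp.lsum R fun γ => LinearMap.toSpanSingleton R _ (F γ)) ∘ₗ
      (MonoidAlgebra.coeffLinearEquiv R).toLinearMap)) <| by
    rw [indRel, Submodule.span_le]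
    rintro z ⟨γ, x, m, rfl⟩
    simp [hF]

lemma lift_gen (F : Γ → M →ₗ[R] N) (hF : ∀ (γ : Γ) (x : X), F (γ * x) = F γ ∘ₗ ρ x)
    (γ : Γ) (c : R) (m : M) : lift F hF (gen R Γ X M ρ γ c m) = c • F γ m :=
  (Submodule.liftQ_apply _ _ _).trans (by simp)

noncomputable def mkₗ (γ : Γ) : M →ₗ[R] Ind R Γ X M ρ :=
  (indRel R Γ X M ρ).mkQ ∘ₗ TensorProduct.mk R _ M (MonoidAlgebra.single γ 1)

lemma mkₗ_apply (γ : Γ) (m : M) : mkₗ γ m = gen R Γ X M ρ γ 1 m :=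
  rfl

/-- Left multiplication on `R Γ` preserves the relations, hence descends to `Ind`. -/
noncomputable def translate (p : Γ) : Ind R Γ X M ρ →ₗ[R] Ind R Γ X M ρ :=
  Submodule.mapQ _ _
    (LinearMap.rTensor M (LinearMap.mulLeft R (MonoidAlgebra.single p (1 : R)))) <| by
      rw [← Submodule.map_le_iff_le_comap, indRel, Submodule.map_span, Submodule.span_le]
      rintro z ⟨w, ⟨γ, x, m, rfl⟩, rfl⟩
      refine Submodule.subset_span ⟨p * γ, x, m, ?_⟩
      simp [MonoidAlgebra.single_mul_single, mul_assoc]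

lemma translate_gen (p γ : Γ) (c : R) (m : M) :
    translate p (gen R Γ X M ρ γ c m) = gen R Γ X M ρ (p * γ) c m :=
  (Submodule.mapQ_apply _ _ _ _).trans (by simp [gen, MonoidAlgebra.single_mul_single])

noncomputable def rep : Γ →* Module.End R (Ind R Γ X M ρ) where
  toFun := translate
  map_one' := by ext; simp [translate_gen]
  map_mul' p p' := by ext; simp [translate_gen, mul_assoc]

lemma rep_gen (p γ : Γ) (c : R) (m : M) :
    rep p (gen R Γ X M ρ γ c m) = gen R Γ X M ρ (p * γ) c m :=
  translate_gen p γ c m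

end Ind

section SigmaInd

variable {R Γ : Type*} [CommRing R] [Group Γ] {X : Subgroup Γ}
  {M : Type*} [AddCommGroup M] [Module R M] (ρ : X →* Module.End R M)

/-- The image of `γ ⊗ m` in `⨁_{q ∈ Γ/X} M`. -/
noncomputable def sigmaOf (γ : Γ) : M →ₗ[R] ⨁ _ : Γ ⧸ X, M :=
  DirectSum.lof R _ (fun _ => M) (γ : Γ ⧸ X) ∘ₗ ρ (cosetOffset γ rfl)

lemma sigmaOf_eq (γ : Γ) {q : Γ ⧸ X} (h : (γ : Γ ⧸ X) = q) :
    sigmaOf ρ γ = DirectSum.lof R _ (fun _ => M) q ∘ₗ ρ (cosetOffset γ h) := by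
  subst h
  rfl

lemma sigmaOf_mul_mem (γ : Γ) (x : X) : sigmaOf ρ (γ * x) = sigmaOf ρ γ ∘ₗ ρ x := by
  rw [sigmaOf_eq ρ (γ * x) (QuotientGroup.mk_mul_of_mem γ x.2),
    cosetOffset_mul_mem γ x rfl, map_mul, Module.End.mul_eq_comp]
  rfl

lemma sigmaOf_out (q : Γ ⧸ X) : sigmaOf ρ q.out = DirectSum.lof R _ (fun _ => M) q := by
  rw [sigmaOf_eq ρ q.out (QuotientGroup.out_eq' q), cosetOffset_out, map_one]
  rfl

noncomputable def sigmaEquivInd : (⨁ _ : Γ ⧸ X, M) ≃ₗ[R] Ind R Γ X M ρ :=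
  LinearEquiv.ofLinearMap (DirectSum.toModule R _ _ fun q => Ind.mkₗ q.out)
    (Ind.lift (sigmaOf ρ) (sigmaOf_mul_mem ρ))
    (Ind.hom_ext fun γ m => by
      simp only [LinearMap.comp_apply, Ind.lift_gen, one_smul, sigmaOf, LinearMap.id_apply,
        DirectSum.toModule_lof, Ind.mkₗ_apply]
      rw [← Ind.gen_mul_mem, out_mul_cosetOffset])
    (DirectSum.linearMap_ext R fun q => LinearMap.ext fun m => by
      simp [Ind.mkₗ_apply, Ind.lift_gen, sigmaOf_out])

lemma sigmaEquivInd_lof (q : Γ ⧸ X) (m : M) :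
    sigmaEquivInd ρ (DirectSum.lof R _ (fun _ => M) q m) = Ind.gen R Γ X M ρ q.out 1 m :=
  DirectSum.toModule_lof R _ _

lemma sigmaEquivInd_symm_gen (γ : Γ) (m : M) :
    (sigmaEquivInd ρ).symm (Ind.gen R Γ X M ρ γ 1 m) = sigmaOf ρ γ m :=
  (Ind.lift_gen (sigmaOf ρ) (sigmaOf_mul_mem ρ) γ 1 m).trans (one_smul R _)

/-- Transported from `Ind`; by `sigmaRep_lof` it is the action of `Σ(M̃)`. -/
noncomputable def sigmaRep : Γ →* Module.End R (⨁ _ : Γ ⧸ X, M) :=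
  ((sigmaEquivInd ρ).symm.conjRingEquiv : Module.End R (Ind R Γ X M ρ) →* _).comp Ind.rep

lemma sigmaRep_lof (p : Γ) (q : Γ ⧸ X) (m : M) :
    sigmaRep ρ p (DirectSum.lof R _ (fun _ => M) q m) =
      DirectSum.lof R _ (fun _ => M) (p • q)
        (ρ (cosetOffset (p * q.out) (smul_eq_mk_mul_out p q).symm) m) :=
  calc sigmaRep ρ p (DirectSum.lof R _ (fun _ => M) q m)
      = (sigmaEquivInd ρ).symm (Ind.rep p (sigmaEquivInd ρ (DirectSum.lof R _ (fun _ => M) q m))) :=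
        rfl
    _ = sigmaOf ρ (p * q.out) m := by
        rw [sigmaEquivInd_lof, Ind.rep_gen, sigmaEquivInd_symm_gen]
    _ = _ := by
        rw [sigmaOf_eq ρ _ (smul_eq_mk_mul_out p q).symm]
        rfl

end SigmaInd

lemma smul_eq_of_hom {q q' : (H × G) ⧸ X} {p : H × G} (hp : p.1 • q = op p.2 • q') :
    p • q = q' :=
  MulAction.injective (op p.2) ((quot_smul_aux X p.1 p.2 q).symm.trans hp)

noncomputable def tildeFunctor {R M : Type u} [CommRing R] [AddCommGroup M] [Module R M]
    (ρ : X →* Module.End R M) : BisetCat H G ((H × G) ⧸ X) ⥤ ModuleCat.{u} R where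
  obj _ := ModuleCat.of R M
  map {u v} f := ModuleCat.ofHom <| ρ <|
    cosetOffset (f.1 * u.x.out) ((smul_eq_mk_mul_out _ _).symm.trans (smul_eq_of_hom X f.2))
  map_id u := by
    ext1
    rw [ModuleCat.hom_ofHom, ModuleCat.hom_id, ← Module.End.one_eq_id, ← map_one ρ]
    exact congrArg ρ (Subtype.ext (show u.x.out⁻¹ * ((1 : H × G) * u.x.out) = 1 by group))
  map_comp f g := by
    ext1
    exact (congrArg ρ (cosetOffset_mul_mul_out _ _ _)).trans (map_mul ρ _ _)

theorem tilde_functor_and_ind {R M : Type u} [CommRing R] [AddCommGroup M] [Module R M]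
    (ρ : X →* Module.End R M) :
    ∃ Mt : BisetCat H G ((H × G) ⧸ X) ⥤ ModuleCat.{u} R,
    ∃ hobj : ∀ q : (H × G) ⧸ X, Mt.obj ⟨q⟩ = ModuleCat.of R M,
      -- the structure maps are the ones prescribed in the paper:
      (∀ (q : (H × G) ⧸ X) (h : H) (g : G) (y : H × G) (hy : y ∈ X)
          (_ : ((h, g) : H × G) * Quotient.out q * y⁻¹ =
            Quotient.out (((h, g) : H × G) • q)) (m : M),
        (CategoryTheory.eqToHom (hobj q).symm ≫
            Mt.map (⟨(h, g), quot_smul_aux X h g q⟩ :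
              (⟨q⟩ : BisetCat H G ((H × G) ⧸ X)) ⟶ ⟨((h, g) : H × G) • q⟩) ≫
            CategoryTheory.eqToHom (hobj (((h, g) : H × G) • q)) :
          ModuleCat.of R M ⟶ ModuleCat.of R M) m = ρ ⟨y, hy⟩ m) ∧
      -- `Σ(M̃)` is an `R(H×G)`-module:
      ∃ ρS : (H × G) →* Module.End R (⨁ q : (H × G) ⧸ X, Mt.obj ⟨q⟩),
        (∀ (h : H) (g : G) (q : (H × G) ⧸ X) (m : Mt.obj ⟨q⟩),
          ρS (h, g) (DirectSum.lof R _ (fun q => Mt.obj ⟨q⟩) q m) =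
            DirectSum.lof R _ (fun q => Mt.obj ⟨q⟩) (((h, g) : H × G) • q)
              (Mt.map (⟨(h, g), quot_smul_aux X h g q⟩ :
                (⟨q⟩ : BisetCat H G ((H × G) ⧸ X)) ⟶ ⟨((h, g) : H × G) • q⟩) m)) ∧
      -- `Ind_X^{H×G} M` is an `R(H×G)`-module:
      ∃ ρI : (H × G) →* Module.End R (Ind R (H × G) X M ρ),
        (∀ (p p' : H × G) (c : R) (m : M),
          ρI p (Ind.gen R (H × G) X M ρ p' c m) = Ind.gen R (H × G) X M ρ (p * p') c m) ∧
      -- and they are isomorphic as `R(H×G)`-modules: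
      ∃ e : (⨁ q : (H × G) ⧸ X, Mt.obj ⟨q⟩) ≃ₗ[R] Ind R (H × G) X M ρ,
        ∀ (p : H × G) x, e (ρS p x) = ρI p (e x) := by
  refine ⟨tildeFunctor X ρ, fun _ => rfl, ?_, sigmaRep ρ, ?_, Ind.rep, Ind.rep_gen,
    sigmaEquivInd ρ, ?_⟩
  · intro q h g y hy hrep m
    exact congrArg (ρ · m) (Subtype.ext (cosetOffset_eq_of_mul_inv_eq _ hrep))
  · intro h g q m
    exact sigmaRep_lof ρ (h, g) q m
  · intro p x
    exact (sigmaEquivInd ρ).apply_symm_apply _
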